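/- Let δ > 2 and suppose the solution of the IDM system has a blow-up time t* > 0 of the velocity, i.e. lim_{t→t*⁻} v(t) = lim_{t→t*⁻} ẋ(t) = −∞. Then the velocity is integrable, v ∈ L¹((0,t*)), and equivalently the position remains finite at blow-up: there exists c ∈ ℝ with lim_{t→t*⁻} x(t) = c. -/

import Mathlib

open MeasureTheory Set Filter Topology

/-- The IDM acceleration function. -/
noncomputable def IDMAcc (a b vfree τ s₀ l δ : ℝ) (x v xl vl : ℝ) : ℝ :=
  a * (1 - (|v| / vfree) ^ δ -
    ((2 * Real.sqrt (a * b) * (s₀ + v * τ) + v * (v - vl)) /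
      (2 * Real.sqrt (a * b) * (xl - x - l))) ^ 2)

/-! Near `t*` we have `v < 0` and `(|v|/v_free)^δ ≥ 2`, so the free-road term dominates and
`w = -v` obeys the superlinear growth law `ẇ ≥ K w^δ` with `K = a / (2 v_free^δ)`. Then
`w^(1-δ) + K (δ-1) t` is antitone and `w^(1-δ) ≥ 0`, so `w(t) ≤ (K (δ-1) (t* - t))^(-1/(δ-1))`,
which is integrable up to `t*` exactly because `δ > 2`. The position is then `x(0)` plus a
convergent integral. -/

theorem IDMAcc_le_free_road {a : ℝ} (ha : 0 ≤ a) (b vfree τ s₀ l δ x v xl vl : ℝ) :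
    IDMAcc a b vfree τ s₀ l δ x v xl vl ≤ a * (1 - (|v| / vfree) ^ δ) :=
  mul_le_mul_of_nonneg_left (sub_le_self _ (sq_nonneg _)) ha

theorem mul_rpow_le_neg_IDMAcc {a vfree δ v : ℝ} (ha : 0 ≤ a) (hvf : 0 ≤ vfree) (hv : v < 0)
    (h2 : 2 ≤ (|v| / vfree) ^ δ) (b τ s₀ l x xl vl : ℝ) :
    a / (2 * vfree ^ δ) * (-v) ^ δ ≤ -IDMAcc a b vfree τ s₀ l δ x v xl vl := by
  have hrw : a / (2 * vfree ^ δ) * (-v) ^ δ = a / 2 * (|v| / vfree) ^ δ := by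
    rw [abs_of_neg hv, Real.div_rpow (neg_nonneg.2 hv.le) hvf]; ring
  rw [hrw]
  linarith [IDMAcc_le_free_road ha b vfree τ s₀ l δ x v xl vl, mul_nonneg ha (sub_nonneg.2 h2)]

section GrowthLaw

variable {w w' : ℝ → ℝ} {t₀ T K p : ℝ}

theorem antitoneOn_rpow_one_sub_add_mul_of_mul_rpow_le_deriv (hp : 1 < p)
    (hw : ∀ t ∈ Ioo t₀ T, 0 < w t ∧ HasDerivAt w (w' t) t ∧ K * w t ^ p ≤ w' t) :
    AntitoneOn (fun t => w t ^ (1 - p) + K * (p - 1) * t) (Ioo t₀ T) := by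
  have hderiv : ∀ t ∈ Ioo t₀ T, HasDerivAt (fun t => w t ^ (1 - p) + K * (p - 1) * t)
      (w' t * (1 - p) * w t ^ (1 - p - 1) + K * (p - 1)) t := fun t ht =>
    ((hw t ht).2.1.rpow_const (Or.inl (hw t ht).1.ne')).add
      (((hasDerivAt_id' t).const_mul _).congr_deriv (mul_one _))
  refine antitoneOn_of_deriv_nonpos (convex_Ioo _ _)
    (fun t ht => (hderiv t ht).continuousAt.continuousWithinAt)
    (fun t ht => (hderiv t (by rwa [interior_Ioo] at ht)).differentiableAt.differentiableWithinAt)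
    fun t ht => ?_
  rw [interior_Ioo] at ht
  obtain ⟨hpos, -, hgrowth⟩ := hw t ht
  rw [(hderiv t ht).deriv, show 1 - p - 1 = -p by ring]
  have hfactor : (1 - p) * w t ^ (-p) ≤ 0 :=
    mul_nonpos_of_nonpos_of_nonneg (by linarith) (Real.rpow_nonneg hpos.le _)
  have hcancel : w t ^ (-p) * w t ^ p = 1 := by
    rw [← Real.rpow_add hpos, neg_add_cancel, Real.rpow_zero]
  calc w' t * (1 - p) * w t ^ (-p) + K * (p - 1)
      = (1 - p) * w t ^ (-p) * w' t + K * (p - 1) := by ring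
    _ ≤ (1 - p) * w t ^ (-p) * (K * w t ^ p) + K * (p - 1) := by
        gcongr ?_ + _; exact mul_le_mul_of_nonpos_left hgrowth hfactor
    _ = 0 := by linear_combination (1 - p) * K * hcancel

theorem le_rpow_of_mul_rpow_le_deriv (hK : 0 < K) (hp : 1 < p)
    (hw : ∀ t ∈ Ioo t₀ T, 0 < w t ∧ HasDerivAt w (w' t) t ∧ K * w t ^ p ≤ w' t) :
    ∀ t ∈ Ioo t₀ T, w t ≤ (K * (p - 1) * (T - t)) ^ (1 - p)⁻¹ := by
  intro t ht
  have hanti := antitoneOn_rpow_one_sub_add_mul_of_mul_rpow_le_deriv hp hw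
  have hlower : K * (p - 1) * (T - t) ≤ w t ^ (1 - p) := by
    have hlim : Tendsto (fun s => K * (p - 1) * (s - t)) (𝓝[<] T) (𝓝 (K * (p - 1) * (T - t))) :=
      ((by fun_prop : Continuous fun s => K * (p - 1) * (s - t)).tendsto T).mono_left
        nhdsWithin_le_nhds
    refine le_of_tendsto hlim ?_
    filter_upwards [Ioo_mem_nhdsLT ht.2] with s hs
    have hsT : s ∈ Ioo t₀ T := ⟨ht.1.trans hs.1, hs.2⟩
    have := hanti ht hsT hs.1.le
    linarith [Real.rpow_nonneg (hw s hsT).1.le (1 - p)]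
  have hbase : 0 < K * (p - 1) * (T - t) :=
    mul_pos (mul_pos hK (by linarith)) (by linarith [ht.2])
  calc w t = (w t ^ (1 - p)) ^ (1 - p)⁻¹ :=
        (Real.rpow_rpow_inv (hw t ht).1.le (by linarith)).symm
    _ ≤ (K * (p - 1) * (T - t)) ^ (1 - p)⁻¹ :=
        Real.rpow_le_rpow_of_nonpos hbase hlower (inv_nonpos.2 (by linarith))

end GrowthLaw

theorem integrableOn_Ioo_of_norm_le_rpow_sub {E : Type*} [NormedAddCommGroup E] {f : ℝ → E}
    {t₀ T c q : ℝ} (hc : 0 ≤ c) (hq : -1 < q) (ht₀ : t₀ ≤ T)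
    (hf : AEStronglyMeasurable f (volume.restrict (Ioo t₀ T)))
    (hbound : ∀ t ∈ Ioo t₀ T, ‖f t‖ ≤ (c * (T - t)) ^ q) :
    IntegrableOn f (Ioo t₀ T) := by
  have hmajorant : IntegrableOn (fun t => c ^ q * (T - t) ^ q) (Ioo t₀ T) := by
    have h := (intervalIntegral.intervalIntegrable_rpow' hq (a := 0) (b := T - t₀)).comp_sub_left T
    simp only [sub_zero, sub_sub_cancel] at h
    exact ((intervalIntegrable_iff_integrableOn_Ioo_of_le ht₀).1 h.symm).const_mul _
  refine hmajorant.mono' hf ((ae_restrict_iff' measurableSet_Ioo).2 (ae_of_all _ fun t ht => ?_))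
  rw [← Real.mul_rpow hc (sub_nonneg.2 ht.2.le)]
  exact hbound t ht

theorem exists_tendsto_nhdsLT_of_hasDerivAt_of_integrableOn {x v : ℝ → ℝ} {a b : ℝ}
    (hab : a < b) (hx : ∀ t ∈ Ico a b, HasDerivAt x (v t) t) (hv : IntegrableOn v (Ioo a b)) :
    ∃ c, Tendsto x (𝓝[<] b) (𝓝 c) := by
  have hvIcc : IntegrableOn v (uIcc a b) := by
    rwa [uIcc_of_le hab.le, integrableOn_Icc_iff_integrableOn_Ioo]
  have hprimitive : Tendsto (fun t => ∫ s in a..t, v s) (𝓝[<] b) (𝓝 (∫ s in a..b, v s)) := by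
    have := (intervalIntegral.continuousOn_primitive_interval hvIcc b right_mem_uIcc).tendsto
    rw [uIcc_of_le hab.le] at this
    rw [← nhdsWithin_Ioo_eq_nhdsLT hab]
    exact this.mono_left (nhdsWithin_mono _ Ioo_subset_Icc_self)
  refine ⟨x a + ∫ s in a..b, v s, (tendsto_const_nhds.add hprimitive).congr' ?_⟩
  filter_upwards [Ioo_mem_nhdsLT hab] with t ht
  have hsub : uIcc a t ⊆ Ico a b := by
    rw [uIcc_of_le ht.1.le]; exact fun s hs => ⟨hs.1, hs.2.trans_lt ht.2⟩
  have htab : t ∈ uIcc a b := by rw [uIcc_of_le hab.le]; exact Ioo_subset_Icc_self ht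
  rw [intervalIntegral.integral_eq_sub_of_hasDerivAt (fun s hs => hx s (hsub hs))
    (hvIcc.mono_set (uIcc_subset_uIcc left_mem_uIcc htab)).intervalIntegrable]
  ring

theorem idm_position_bounded_at_blow_up_general
    (a b vfree s₀ l δ τ tstar : ℝ)
    (ha : 0 < a) (hvf : 0 < vfree) (hδ : 2 < δ) (htstar : 0 < tstar)
    (x v xl vl : ℝ → ℝ)
    (hx : ∀ t ∈ Ico (0:ℝ) tstar, HasDerivAt x (v t) t)
    (hv : ∀ t ∈ Ico (0:ℝ) tstar,
      HasDerivAt v (IDMAcc a b vfree τ s₀ l δ (x t) (v t) (xl t) (vl t)) t)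
    (hblow : Tendsto v (nhdsWithin tstar (Iio tstar)) atBot) :
    IntegrableOn v (Ioo 0 tstar) volume ∧
    ∃ c : ℝ, Tendsto x (nhdsWithin tstar (Iio tstar)) (nhds c) := by
  have hvc : ContinuousOn v (Ico 0 tstar) := fun t ht =>
    (hv t ht).continuousAt.continuousWithinAt
  have hfree : Tendsto (fun t => (|v t| / vfree) ^ δ) (𝓝[<] tstar) atTop :=
    (tendsto_rpow_atTop (by linarith)).comp
      ((tendsto_abs_atBot_atTop.comp hblow).atTop_div_const hvf)
  have hev : ∀ᶠ t in 𝓝[<] tstar, t ∈ Ioo 0 tstar ∧ v t < 0 ∧ 2 ≤ (|v t| / vfree) ^ δ :=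
    Eventually.and (Ioo_mem_nhdsLT htstar)
      ((hblow.eventually_lt_atBot 0).and (hfree.eventually_ge_atTop 2))
  obtain ⟨t₀, ht₀, hnear⟩ := mem_nhdsLT_iff_exists_Ioo_subset.1 hev
  have hsub : Ioo t₀ tstar ⊆ Ico 0 tstar := fun t ht => Ioo_subset_Ico_self (hnear ht).1
  have hrate := le_rpow_of_mul_rpow_le_deriv (w := fun t => -v t) (K := a / (2 * vfree ^ δ))
    (by positivity) (by linarith) fun t ht => ⟨neg_pos.2 (hnear ht).2.1, (hv t (hsub ht)).neg,
      mul_rpow_le_neg_IDMAcc ha.le hvf.le (hnear ht).2.1 (hnear ht).2.2 _ _ _ _ _ _ _⟩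
  have hexponent : -1 < (1 - δ)⁻¹ := by
    rw [lt_inv_of_neg (by norm_num) (by linarith)]; linarith
  have hnear_int : IntegrableOn v (Ioo t₀ tstar) :=
    integrableOn_Ioo_of_norm_le_rpow_sub (c := a / (2 * vfree ^ δ) * (δ - 1))
      (mul_nonneg (by positivity) (by linarith)) hexponent ht₀.le
      ((hvc.mono hsub).aestronglyMeasurable measurableSet_Ioo) fun t ht => by
        rw [Real.norm_eq_abs, abs_of_neg (hnear ht).2.1]; exact hrate t ht
  have hint : IntegrableOn v (Ioo 0 tstar) :=
    (((hvc.mono fun _ hs => ⟨hs.1, hs.2.trans_lt ht₀⟩).integrableOn_Icc.mono_set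
      Ioc_subset_Icc_self).union hnear_int).mono_set Ioo_subset_Ioc_union_Ioo
  exact ⟨hint, exists_tendsto_nhdsLT_of_hasDerivAt_of_integrableOn htstar hx hint⟩

/-- **Boundedness of the position in the case of a blow-up of the velocity.**
Let `δ > 2` and suppose the follower solves the IDM dynamics on `[0, t*)`
(against a leader with nonnegative, bounded velocity and positive gap) and
its velocity blows down, `v(t) → −∞` as `t → t*⁻`. Then `v ∈ L¹((0,t*))`
and the position converges to a finite limit `c` as `t → t*⁻`. -/
theorem idm_position_bounded_at_blow_up
    (a b vfree s₀ l δ τ tstar : ℝ)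
    (ha : 0 < a) (hb : 0 < b) (hvf : 0 < vfree) (hs₀ : 0 < s₀) (hl : 0 < l)
    (hτ : 0 < τ) (hδ : 2 < δ) (htstar : 0 < tstar)
    (x v xl vl : ℝ → ℝ)
    (hvl_nonneg : ∀ t ∈ Ico (0:ℝ) tstar, 0 ≤ vl t)
    (hvl_bdd : ∃ M : ℝ, ∀ t ∈ Ico (0:ℝ) tstar, |vl t| ≤ M)
    (hgap : ∀ t ∈ Ico (0:ℝ) tstar, 0 < xl t - x t - l)
    (hx : ∀ t ∈ Ico (0:ℝ) tstar, HasDerivAt x (v t) t)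
    (hv : ∀ t ∈ Ico (0:ℝ) tstar,
      HasDerivAt v (IDMAcc a b vfree τ s₀ l δ (x t) (v t) (xl t) (vl t)) t)
    (hblow : Tendsto v (nhdsWithin tstar (Iio tstar)) atBot) :
    IntegrableOn v (Ioo 0 tstar) volume ∧
    ∃ c : ℝ, Tendsto x (nhdsWithin tstar (Iio tstar)) (nhds c) :=
  idm_position_bounded_at_blow_up_general a b vfree s₀ l δ τ tstar ha hvf hδ htstar x v xl vl hx hv
    hblow
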